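/- arXiv:1710.05763 — 4 statements merged into one kernel-verified Lean document; each statement's English description precedes it below -/
import Mathlib

section
/- For every Lebesgue-measurable set A ⊆ [0,1], the two-dimensional Lebesgue measure of the set {(x,y) ∈ [0,1]² : (x ∈ A and x < y) or (x ∉ A and y < x)} is at most 3/4. -/
/-!
The reflection `y ↦ 1 - y` preserves Lebesgue measure, so the winning set `E` and its preimage
`F` have the same measure and `2 |E| = |E ∪ F| + |E ∩ F|`. The union lies in the unit square.
A point of `E ∩ F` is won for both `y` and `1 - y`, so either `x < min y (1 - y)` or
`x > max y (1 - y)`; these two triangles are disjoint from their image under the swap of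
coordinates, hence have total area at most `1/2`. Thus `2 |E| ≤ 1 + 1/2`.
-/

open MeasureTheory Set

theorem two_mul_measure_le_add_measure_inter_preimage {α : Type*} [MeasurableSpace α]
    {μ : Measure α} {f : α → α} (hf : MeasurePreserving f μ μ) {s B : Set α}
    (hs : MeasurableSet s) (hB : s ∪ f ⁻¹' s ⊆ B) :
    2 * μ s ≤ μ B + μ (s ∩ f ⁻¹' s) :=
  calc 2 * μ s = μ s + μ (f ⁻¹' s) := by rw [two_mul, hf.measure_preimage hs.nullMeasurableSet]
    _ = μ (s ∪ f ⁻¹' s) + μ (s ∩ f ⁻¹' s) :=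
      (measure_union_add_inter s (hs.preimage hf.measurable)).symm
    _ ≤ μ B + μ (s ∩ f ⁻¹' s) := by gcongr

theorem volume_unitSquare : volume (Icc (0:ℝ) 1 ×ˢ Icc (0:ℝ) 1) = 1 := by
  rw [Measure.volume_eq_prod, Measure.prod_prod, Real.volume_Icc]
  norm_num

def winningSet (A : Set ℝ) : Set (ℝ × ℝ) :=
  {p | p ∈ Icc (0:ℝ) 1 ×ˢ Icc (0:ℝ) 1 ∧ ((p.1 ∈ A ∧ p.1 < p.2) ∨ (p.1 ∉ A ∧ p.2 < p.1))}

def crossTriangles : Set (ℝ × ℝ) :=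
  {p | p ∈ Icc (0:ℝ) 1 ×ˢ Icc (0:ℝ) 1 ∧
    ((p.1 < p.2 ∧ p.1 + p.2 < 1) ∨ (p.2 < p.1 ∧ 1 < p.1 + p.2))}

def reflectSnd (p : ℝ × ℝ) : ℝ × ℝ := (p.1, 1 - p.2)

theorem measurePreserving_reflectSnd : MeasurePreserving reflectSnd volume volume := by
  rw [Measure.volume_eq_prod]
  exact (MeasurePreserving.id volume).prod (Measure.measurePreserving_sub_left volume 1)

theorem measurePreserving_swap_volume {α β : Type*} [MeasureSpace α] [MeasureSpace β]
    [SFinite (volume : Measure α)] [SFinite (volume : Measure β)] :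
    MeasurePreserving (Prod.swap : α × β → β × α) volume volume := by
  rw [Measure.volume_eq_prod, Measure.volume_eq_prod]
  exact Measure.measurePreserving_swap

theorem measurableSet_winningSet {A : Set ℝ} (hA : MeasurableSet A) :
    MeasurableSet (winningSet A) :=
  (measurableSet_Icc.prod measurableSet_Icc).inter <|
    ((hA.preimage measurable_fst).inter (measurableSet_lt measurable_fst measurable_snd)).union
      ((hA.preimage measurable_fst).compl.inter (measurableSet_lt measurable_snd measurable_fst))

theorem measurableSet_crossTriangles : MeasurableSet crossTriangles :=
  (measurableSet_Icc.prod measurableSet_Icc).inter <|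
    ((measurableSet_lt measurable_fst measurable_snd).inter
      (measurableSet_lt (measurable_fst.add measurable_snd) measurable_const)).union
    ((measurableSet_lt measurable_snd measurable_fst).inter
      (measurableSet_lt measurable_const (measurable_fst.add measurable_snd)))

theorem two_mul_volume_crossTriangles_le : 2 * volume crossTriangles ≤ 1 := by
  have hdisj : crossTriangles ∩ Prod.swap ⁻¹' crossTriangles = ∅ := by
    ext ⟨x, y⟩
    simp only [crossTriangles, mem_inter_iff, mem_preimage, mem_ofPred_eq, Prod.fst_swap,
      Prod.snd_swap, mem_empty_iff_false, iff_false]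
    rintro ⟨⟨-, h⟩, -, h'⟩
    rcases h with h | h <;> rcases h' with h' | h' <;> linarith [h.1, h.2, h'.1, h'.2]
  have hsub : crossTriangles ∪ Prod.swap ⁻¹' crossTriangles ⊆ Icc (0:ℝ) 1 ×ˢ Icc (0:ℝ) 1 := by
    rintro ⟨x, y⟩ (⟨h, -⟩ | ⟨h, -⟩)
    exacts [h, ⟨h.2, h.1⟩]
  have h := two_mul_measure_le_add_measure_inter_preimage measurePreserving_swap_volume
    measurableSet_crossTriangles hsub
  rwa [hdisj, measure_empty, add_zero, volume_unitSquare] at h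

theorem winningSet_union_preimage_reflectSnd_subset (A : Set ℝ) :
    winningSet A ∪ reflectSnd ⁻¹' winningSet A ⊆ Icc (0:ℝ) 1 ×ˢ Icc (0:ℝ) 1 := by
  rintro ⟨x, y⟩ (⟨h, -⟩ | ⟨⟨hx, hy⟩, -⟩)
  · exact h
  · simp only [reflectSnd, mem_Icc] at hx hy
    exact ⟨hx, by linarith [hy.1, hy.2], by linarith [hy.1, hy.2]⟩

theorem winningSet_inter_preimage_reflectSnd_subset (A : Set ℝ) :
    winningSet A ∩ reflectSnd ⁻¹' winningSet A ⊆ crossTriangles := by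
  rintro ⟨x, y⟩ ⟨⟨hbox, h⟩, -, h'⟩
  simp only [reflectSnd] at h h'
  refine ⟨hbox, ?_⟩
  rcases h with ⟨hxA, hxy⟩ | ⟨hxA, hyx⟩ <;> rcases h' with ⟨hxA', hxy'⟩ | ⟨hxA', hyx'⟩
  · exact Or.inl ⟨hxy, by linarith⟩
  · exact absurd hxA hxA'
  · exact absurd hxA' hxA
  · exact Or.inr ⟨hyx, by linarith⟩

theorem stmt_1_general (A : Set ℝ) (hA : MeasurableSet A) :
    volume {p : ℝ × ℝ | p ∈ Icc (0:ℝ) 1 ×ˢ Icc (0:ℝ) 1 ∧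
        ((p.1 ∈ A ∧ p.1 < p.2) ∨ (p.1 ∉ A ∧ p.2 < p.1))} ≤ 3/4 := by
  change volume (winningSet A) ≤ 3 / 4
  have hwin := two_mul_measure_le_add_measure_inter_preimage measurePreserving_reflectSnd
    (measurableSet_winningSet hA) (winningSet_union_preimage_reflectSnd_subset A)
  rw [volume_unitSquare] at hwin
  have hinter := measure_mono (μ := volume) (winningSet_inter_preimage_reflectSnd_subset A)
  have hfour : volume (winningSet A) * 4 ≤ 3 :=
    calc volume (winningSet A) * 4 = 2 * (2 * volume (winningSet A)) := by ring
      _ ≤ 2 * (1 + volume crossTriangles) := by gcongr; exact hwin.trans (add_le_add_right hinter 1)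
      _ = 2 + 2 * volume crossTriangles := by ring
      _ ≤ 2 + 1 := by gcongr; exact two_mul_volume_crossTriangles_le
      _ = 3 := by norm_num
  exact (ENNReal.le_div_iff_mul_le (by norm_num) (by norm_num)).2 hfour

/-- For every Lebesgue-measurable set `A ⊆ [0,1]`, the two-dimensional Lebesgue measure of
`{(x,y) ∈ [0,1]² | (x ∈ A ∧ x < y) ∨ (x ∉ A ∧ y < x)}` is at most `3/4`. -/
theorem stmt_1 (A : Set ℝ) (hA : MeasurableSet A) (hA' : A ⊆ Set.Icc 0 1) :
    volume {p : ℝ × ℝ | p ∈ Icc (0:ℝ) 1 ×ˢ Icc (0:ℝ) 1 ∧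
        ((p.1 ∈ A ∧ p.1 < p.2) ∨ (p.1 ∉ A ∧ p.2 < p.1))} ≤ 3/4 :=
  stmt_1_general A hA
end

section
/- Let X ~ Uni(0,8), Z ~ Uni(0,4), Z' ~ Uni(0,4), and Y ~ Uni(0,1) be independent random variables, and set R := max(X − Z, 0). Then P( (R < Z' and R < Y) or (Z' < R and Y < R) ) = 77/96. Equivalently, the four-dimensional Lebesgue measure of the set {(x,z,z',y) ∈ [0,8]×[0,4]×[0,4]×[0,1] : (max(x−z,0) < z' and max(x−z,0) < y) or (z' < max(x−z,0) and y < max(x−z,0))} equals (77/96)·128 = 308/3. -/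
open MeasureTheory Set

/-!
Fix `X = x` and `Z = z`, so that `R = r := max (x - z) 0`. The event then asks `(Z', Y)` to lie on
the same side of `r` in both coordinates, which has area
`A r = (4 - r)⁺ (1 - r)⁺ + min r 4 · min r 1` in `[0,4] × [0,1]`. Since `A = 4` on `(-∞, 0]` and on
`[4, ∞)`, the substitution `t = x - z` turns `∫₀⁸ A (max (x - z) 0) dx` into
`4 · 4 + ∫₀⁴ A = 16 + 29/3 = 77/3` for every `z ∈ [0, 4]`. Integrating over `z` gives the volume
`4 · 77/3 = 308/3`, and dividing by the volume `128` of the box gives `77/96`.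
-/

/-- The uniform probability measure on the real interval `[a, b]`:
normalized Lebesgue measure restricted to `Icc a b`. -/
noncomputable def unif (a b : ℝ) : Measure ℝ :=
  (volume (Set.Icc a b))⁻¹ • volume.restrict (Set.Icc a b)

instance (a b : ℝ) : SFinite (unif a b) := by unfold unif; infer_instance

lemma volume_Icc_inter_Ioi {a r : ℝ} (hr : 0 ≤ r) :
    volume (Icc 0 a ∩ Ioi r) = ENNReal.ofReal (a - r) := by
  rw [show Icc 0 a ∩ Ioi r = Ioc r a by
      ext t; simp only [mem_inter_iff, mem_Icc, mem_Ioi, mem_Ioc]; grind,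
    Real.volume_Ioc]

lemma volume_Icc_inter_Iio (a r : ℝ) : volume (Icc 0 a ∩ Iio r) = ENNReal.ofReal (min r a) := by
  rcases le_or_gt r a with h | h
  · rw [show Icc 0 a ∩ Iio r = Ico 0 r by
        ext t; simp only [mem_inter_iff, mem_Icc, mem_Iio, mem_Ico]; grind,
      Real.volume_Ico, min_eq_left h, sub_zero]
  · rw [inter_eq_left.2 fun t ht => ht.2.trans_lt h, Real.volume_Icc, min_eq_right h.le, sub_zero]

def sameSide (r : ℝ) : Set (ℝ × ℝ) := {q | (r < q.1 ∧ r < q.2) ∨ (q.1 < r ∧ q.2 < r)}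

noncomputable def sameSideArea (a b r : ℝ) : ℝ :=
  max (a - r) 0 * max (b - r) 0 + min r a * min r b

lemma sameSideArea_nonneg {a b r : ℝ} (ha : 0 ≤ a) (hb : 0 ≤ b) (hr : 0 ≤ r) :
    0 ≤ sameSideArea a b r := by
  unfold sameSideArea; positivity

lemma volume_Icc_prod_Icc_inter_sameSide {a b r : ℝ} (ha : 0 ≤ a) (hb : 0 ≤ b) (hr : 0 ≤ r) :
    volume ((Icc 0 a ×ˢ Icc 0 b) ∩ sameSide r) = ENNReal.ofReal (sameSideArea a b r) := by
  have hsplit : (Icc 0 a ×ˢ Icc 0 b) ∩ sameSide r =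
      (Icc 0 a ∩ Ioi r) ×ˢ (Icc 0 b ∩ Ioi r) ∪ (Icc 0 a ∩ Iio r) ×ˢ (Icc 0 b ∩ Iio r) := by
    ext ⟨s, t⟩
    simp only [sameSide, mem_inter_iff, mem_prod, mem_ofPred_eq, mem_union, mem_Ioi, mem_Iio]
    tauto
  have hdisj : Disjoint ((Icc 0 a ∩ Ioi r) ×ˢ (Icc 0 b ∩ Ioi r))
      ((Icc 0 a ∩ Iio r) ×ˢ (Icc 0 b ∩ Iio r)) :=
    disjoint_left.2 fun q h₁ h₂ => lt_asymm (mem_Ioi.1 h₁.1.2) (mem_Iio.1 h₂.1.2)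
  rw [hsplit, measure_union hdisj ((measurableSet_Icc.inter measurableSet_Iio).prod
      (measurableSet_Icc.inter measurableSet_Iio)), Measure.volume_eq_prod, Measure.prod_prod,
    Measure.prod_prod, volume_Icc_inter_Ioi hr, volume_Icc_inter_Ioi hr, volume_Icc_inter_Iio,
    volume_Icc_inter_Iio, sameSideArea, ENNReal.ofReal_add (by positivity) (by positivity),
    ENNReal.ofReal_mul (by positivity), ENNReal.ofReal_mul (by positivity)]
  simp

lemma integral_window_eq_of_eqOn_Iic_Ici {h : ℝ → ℝ} (hh : Continuous h) {c L W z : ℝ}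
    (hlo : EqOn h (fun _ => c) (Iic 0)) (hhi : EqOn h (fun _ => c) (Ici L)) (hz : 0 ≤ z)
    (hzW : z ≤ W - L) :
    ∫ t in -z..W - z, h t = c * (W - L) + ∫ t in 0..L, h t := by
  have hint (a b : ℝ) : IntervalIntegrable h volume a b := hh.intervalIntegrable a b
  have hleft : ∫ t in -z..0, h t = c * z := by
    rw [intervalIntegral.integral_congr (hlo.mono ?_), intervalIntegral.integral_const,
      smul_eq_mul]
    · ring
    · rw [uIcc_of_le (neg_nonpos.2 hz)]; exact Icc_subset_Iic_self
  have hright : ∫ t in L..W - z, h t = c * (W - z - L) := by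
    rw [intervalIntegral.integral_congr (hhi.mono ?_), intervalIntegral.integral_const,
      smul_eq_mul]
    · ring
    · rw [uIcc_of_le (by linarith)]; exact Icc_subset_Ici_self
  rw [← intervalIntegral.integral_add_adjacent_intervals (hint (-z) 0) (hint 0 (W - z)),
    ← intervalIntegral.integral_add_adjacent_intervals (hint 0 L) (hint L (W - z)), hleft, hright]
  ring

lemma integral_sameSideArea_four_one : ∫ t in (0:ℝ)..4, sameSideArea 4 1 t = 29 / 3 := by
  have hcont : Continuous (sameSideArea 4 1) := by unfold sameSideArea; fun_prop
  have hderiv (t : ℝ) : HasDerivAt (fun t => 2 / 3 * t ^ 3 - 5 / 2 * t ^ 2 + 4 * t)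
      ((4 - t) * (1 - t) + t * t) t := by
    refine ((((hasDerivAt_pow 3 t).const_mul (2 / 3)).sub
      ((hasDerivAt_pow 2 t).const_mul (5 / 2))).add ((hasDerivAt_id t).const_mul 4)).congr_deriv ?_
    push_cast; ring
  have hlow : ∫ t in (0:ℝ)..1, sameSideArea 4 1 t = 13 / 6 := by
    rw [intervalIntegral.integral_congr (g := fun t => (4 - t) * (1 - t) + t * t),
      intervalIntegral.integral_eq_sub_of_hasDerivAt (fun t _ => hderiv t)
        (by apply Continuous.intervalIntegrable; fun_prop)]
    · norm_num
    · intro t ht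
      rw [uIcc_of_le zero_le_one] at ht
      simp only [sameSideArea]
      rw [max_eq_left (by linarith [ht.2]), max_eq_left (by linarith [ht.2]),
        min_eq_left (by linarith [ht.2]), min_eq_left ht.2]
  have hhigh : ∫ t in (1:ℝ)..4, sameSideArea 4 1 t = 15 / 2 := by
    rw [intervalIntegral.integral_congr (g := fun t => t), integral_id]
    · norm_num
    · intro t ht
      rw [uIcc_of_le (by norm_num)] at ht
      simp only [sameSideArea]
      rw [max_eq_right (b := 0) (by linarith [ht.1] : 1 - t ≤ 0), min_eq_left ht.2,
        min_eq_right ht.1]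
      ring
  rw [← intervalIntegral.integral_add_adjacent_intervals (hcont.intervalIntegrable 0 1)
    (hcont.intervalIntegrable 1 4), hlow, hhigh]
  norm_num

lemma integral_Icc_sameSideArea_four_one {z : ℝ} (hz : z ∈ Icc (0:ℝ) 4) :
    ∫ x in Icc (0:ℝ) 8, sameSideArea 4 1 (max (x - z) 0) = 77 / 3 := by
  have hcont : Continuous fun t => sameSideArea 4 1 (max t 0) := by
    unfold sameSideArea; fun_prop
  have hconst : EqOn (fun t => sameSideArea 4 1 (max t 0)) (fun _ => 4) (Iic 0 ∪ Ici 4) := by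
    rintro t (ht | ht)
    · simp [sameSideArea, max_eq_right (mem_Iic.1 ht)]
    · have ht : 4 ≤ t := ht
      show sameSideArea 4 1 (max t 0) = 4
      rw [max_eq_left (by linarith : (0:ℝ) ≤ t), sameSideArea,
        max_eq_right (by linarith : 4 - t ≤ 0), max_eq_right (by linarith : 1 - t ≤ 0),
        min_eq_right ht, min_eq_right (by linarith)]
      norm_num
  rw [integral_Icc_eq_integral_Ioc, ← intervalIntegral.integral_of_le (by norm_num),
    intervalIntegral.integral_comp_sub_right (fun t => sameSideArea 4 1 (max t 0)), zero_sub,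
    integral_window_eq_of_eqOn_Iic_Ici hcont (hconst.mono subset_union_left)
      (hconst.mono subset_union_right) hz.1 (by linarith [hz.2]),
    intervalIntegral.integral_congr (g := sameSideArea 4 1) fun t ht => ?_,
    integral_sameSideArea_four_one]
  · norm_num
  · rw [uIcc_of_le (by norm_num)] at ht
    simp only [max_eq_left ht.1]

lemma lintegral_Icc_sameSideArea_four_one {z : ℝ} (hz : z ∈ Icc (0:ℝ) 4) :
    ∫⁻ x in Icc (0:ℝ) 8, ENNReal.ofReal (sameSideArea 4 1 (max (x - z) 0)) =
      ENNReal.ofReal (77 / 3) := by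
  have hint : IntegrableOn (fun x => sameSideArea 4 1 (max (x - z) 0)) (Icc 0 8) := by
    refine Continuous.integrableOn_Icc ?_
    unfold sameSideArea; fun_prop
  rw [← ofReal_integral_eq_lintegral_ofReal hint
    (ae_of_all _ fun x => sameSideArea_nonneg zero_le_four zero_le_one (le_max_right _ _)),
    integral_Icc_sameSideArea_four_one hz]

lemma MeasureTheory.Measure.prod_prod_apply_eq_lintegral_lintegral {α β γ : Type*}
    [MeasurableSpace α] [MeasurableSpace β] [MeasurableSpace γ] (μ : Measure α) (ν : Measure β)
    (ρ : Measure γ) [SFinite ν] [SFinite ρ] {s : Set (α × β × γ)} (hs : MeasurableSet s) :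
    μ.prod (ν.prod ρ) s = ∫⁻ a, ∫⁻ b, ρ {c | (a, b, c) ∈ s} ∂ν ∂μ := by
  rw [Measure.prod_apply hs]
  exact lintegral_congr fun a => Measure.prod_apply (measurable_prodMk_left hs)

def sameSideEvent : Set (ℝ × ℝ × ℝ × ℝ) := {p | p.2.2 ∈ sameSide (max (p.1 - p.2.1) 0)}

lemma measurableSet_sameSideEvent : MeasurableSet sameSideEvent := by
  have hR : Measurable fun p : ℝ × ℝ × ℝ × ℝ => max (p.1 - p.2.1) 0 := by fun_prop
  have h₁ : Measurable fun p : ℝ × ℝ × ℝ × ℝ => p.2.2.1 := by fun_prop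
  have h₂ : Measurable fun p : ℝ × ℝ × ℝ × ℝ => p.2.2.2 := by fun_prop
  exact ((measurableSet_lt hR h₁).inter (measurableSet_lt hR h₂)).union
    ((measurableSet_lt h₁ hR).inter (measurableSet_lt h₂ hR))

lemma volume_slice_box_inter_sameSideEvent (x z : ℝ) :
    volume {c : ℝ × ℝ | (x, z, c) ∈
      Icc (0:ℝ) 8 ×ˢ (Icc (0:ℝ) 4 ×ˢ (Icc (0:ℝ) 4 ×ˢ Icc (0:ℝ) 1)) ∩ sameSideEvent} =
      (Icc 0 4).indicator (fun z => (Icc 0 8).indicator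
        (fun x => ENNReal.ofReal (sameSideArea 4 1 (max (x - z) 0))) x) z := by
  by_cases hxz : x ∈ Icc (0:ℝ) 8 ∧ z ∈ Icc (0:ℝ) 4
  · rw [indicator_of_mem hxz.2, indicator_of_mem hxz.1, ← volume_Icc_prod_Icc_inter_sameSide
      zero_le_four zero_le_one (le_max_right _ _)]
    congr 1
    ext c
    simp only [sameSideEvent, mem_inter_iff, mem_prod, mem_ofPred_eq, hxz.1, hxz.2, true_and]
  · obtain hx | hz := not_and_or.1 hxz
    · simp only [mem_inter_iff, mem_prod, hx, false_and, ofPred_false, measure_empty,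
        indicator_of_notMem hx, indicator_zero]
    · simp only [mem_inter_iff, mem_prod, hz, false_and, and_false, ofPred_false, measure_empty,
        indicator_of_notMem hz]

lemma volume_box_inter_sameSideEvent :
    volume (Icc (0:ℝ) 8 ×ˢ (Icc (0:ℝ) 4 ×ˢ (Icc (0:ℝ) 4 ×ˢ Icc (0:ℝ) 1)) ∩ sameSideEvent) =
      308 / 3 := by
  have hmeas : Measurable fun q : ℝ × ℝ => (Icc 0 8).indicator
      (fun x => ENNReal.ofReal (sameSideArea 4 1 (max (x - q.2) 0))) q.1 := by
    refine Measurable.indicator ?_ (measurableSet_Icc.preimage measurable_fst)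
    unfold sameSideArea; fun_prop
  rw [Measure.volume_eq_prod ℝ (ℝ × ℝ × ℝ), Measure.volume_eq_prod ℝ (ℝ × ℝ),
    Measure.prod_prod_apply_eq_lintegral_lintegral _ _ _
      ((measurableSet_Icc.prod (measurableSet_Icc.prod (measurableSet_Icc.prod
        measurableSet_Icc))).inter measurableSet_sameSideEvent)]
  simp_rw [volume_slice_box_inter_sameSideEvent, lintegral_indicator measurableSet_Icc]
  rw [lintegral_lintegral_swap hmeas.aemeasurable]
  simp_rw [lintegral_indicator measurableSet_Icc]
  rw [setLIntegral_congr_fun measurableSet_Icc fun z hz => lintegral_Icc_sameSideArea_four_one hz,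
    setLIntegral_const, Real.volume_Icc, ← ENNReal.ofReal_mul (by norm_num)]
  norm_num [ENNReal.ofReal_div_of_pos]

lemma unif_prod_apply_sameSideEvent :
    ((unif 0 8).prod ((unif 0 4).prod ((unif 0 4).prod (unif 0 1)))) sameSideEvent = 77 / 96 := by
  simp only [unif, Measure.prod_smul_left, Measure.prod_smul_right, Measure.prod_restrict,
    Measure.smul_apply, smul_eq_mul]
  rw [Measure.restrict_apply' (measurableSet_Icc.prod (measurableSet_Icc.prod
      (measurableSet_Icc.prod measurableSet_Icc))), inter_comm, ← Measure.volume_eq_prod,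
    ← Measure.volume_eq_prod, ← Measure.volume_eq_prod, volume_box_inter_sameSideEvent]
  simp only [Real.volume_Icc, sub_zero, ENNReal.ofReal_one, ENNReal.ofReal_ofNat, inv_one, one_mul]
  rw [← ENNReal.toReal_eq_toReal_iff' (by finiteness) (by finiteness)]
  norm_num [ENNReal.toReal_mul, ENNReal.toReal_inv, ENNReal.toReal_div]

/-- Let `X ~ Uni(0,8)`, `Z ~ Uni(0,4)`, `Z' ~ Uni(0,4)`, `Y ~ Uni(0,1)` be independent
(modelled by the product measure, with `p = (x, z, z', y)`), and let `R := max (X - Z) 0`.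
Then `P((R < Z' ∧ R < Y) ∨ (Z' < R ∧ Y < R)) = 77/96`.  Equivalently, the four-dimensional
Lebesgue measure of the corresponding subset of `[0,8] × [0,4] × [0,4] × [0,1]` equals
`(77/96) · 128 = 308/3`. -/
theorem stmt_2 :
    ((unif 0 8).prod ((unif 0 4).prod ((unif 0 4).prod (unif 0 1))))
        {p : ℝ × ℝ × ℝ × ℝ |
          (max (p.1 - p.2.1) 0 < p.2.2.1 ∧ max (p.1 - p.2.1) 0 < p.2.2.2) ∨
          (p.2.2.1 < max (p.1 - p.2.1) 0 ∧ p.2.2.2 < max (p.1 - p.2.1) 0)} = 77/96 ∧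
    volume {p : ℝ × ℝ × ℝ × ℝ |
          p ∈ Icc (0:ℝ) 8 ×ˢ (Icc (0:ℝ) 4 ×ˢ (Icc (0:ℝ) 4 ×ˢ Icc (0:ℝ) 1)) ∧
          ((max (p.1 - p.2.1) 0 < p.2.2.1 ∧ max (p.1 - p.2.1) 0 < p.2.2.2) ∨
           (p.2.2.1 < max (p.1 - p.2.1) 0 ∧ p.2.2.2 < max (p.1 - p.2.1) 0))} = 308/3 :=
  ⟨unif_prod_apply_sameSideEvent, volume_box_inter_sameSideEvent⟩
end

section
/- Let X ~ Uni(0,8), Z ~ Uni(0,4), Z' ~ Uni(0,4), and Y ~ Uni(0,1) be independent random variables, and set R := max(X − Z, 0) and T := min(X, Z). Then P( (R < Z' and T < 35/12 and R < Y) or (not(R < Z' and T < 35/12) and Y < R) ) = 7561/9216. In particular, 7561/9216 > 77/96. -/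
/-!
Conditionally on `X = x` and `Z = z`, the residual time `r = max (x - z) 0` and the guard
`min x z < τ` are fixed, and the scheduler wins with probability
`P(Z' > r) P(Y > r) + P(Z' ≤ r) P(Y < r)` if the guard holds and `P(Y < r)` otherwise, a
piecewise polynomial in `r`. Integrating over `x` gives `77/12` for `z < τ` and
`τ + 15/2 - z` for `z ≥ τ`, so the winning probability of the threshold-`τ` scheduler is
`(77τ/12 + (4 - τ)(τ + 15/2) - (16 - τ²)/2) / 32`. Its derivative in `τ` is `(35/12 - τ)/32`:
`τ = 35/12` is the best threshold, with value `7561/9216`, while `τ = 4` (deciding on the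
expiration order alone) gives `77/96`.
-/

open MeasureTheory Set

open intervalIntegral
open scoped ENNReal

section Uniform

variable {a b : ℝ}

theorem unif_apply {s : Set ℝ} (hs : MeasurableSet s) :
    unif a b s = (ENNReal.ofReal (b - a))⁻¹ * volume (s ∩ Icc a b) := by
  simp [unif, Measure.restrict_apply hs, Real.volume_Icc]

theorem lintegral_unif (f : ℝ → ℝ≥0∞) :
    ∫⁻ x, f x ∂unif a b = (ENNReal.ofReal (b - a))⁻¹ * ∫⁻ x in Icc a b, f x := by
  simp [unif, lintegral_smul_measure, Real.volume_Icc]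

theorem ae_unif_mem_Icc : ∀ᵐ x ∂unif a b, x ∈ Icc a b :=
  Measure.ae_smul_measure (ae_restrict_mem measurableSet_Icc) _

theorem isProbabilityMeasure_unif (hab : a < b) : IsProbabilityMeasure (unif a b) := by
  constructor
  rw [unif_apply MeasurableSet.univ, univ_inter, Real.volume_Icc,
    ENNReal.inv_mul_cancel (by simpa using hab) ENNReal.ofReal_ne_top]

theorem unif_Iic (hab : a < b) (r : ℝ) :
    unif a b (Iic r) = ENNReal.ofReal ((min r b - a) / (b - a)) := by
  have : Iic r ∩ Icc a b = Icc a (min r b) := by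
    ext x; simp only [mem_inter_iff, mem_Iic, mem_Icc, le_min_iff]; tauto
  rw [unif_apply measurableSet_Iic, this, Real.volume_Icc,
    ENNReal.ofReal_div_of_pos (sub_pos.2 hab), div_eq_mul_inv, mul_comm]

theorem unif_Iio (hab : a < b) (r : ℝ) :
    unif a b (Iio r) = ENNReal.ofReal ((min r b - a) / (b - a)) := by
  rw [← unif_Iic hab, unif_apply measurableSet_Iio, unif_apply measurableSet_Iic,
    measure_congr (Iio_ae_eq_Iic.inter (ae_eq_refl (Icc a b)))]

theorem unif_Ioi (hab : a < b) {r : ℝ} (har : a ≤ r) :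
    unif a b (Ioi r) = ENNReal.ofReal (1 - (min r b - a) / (b - a)) := by
  have := isProbabilityMeasure_unif hab
  have hF : 0 ≤ (min r b - a) / (b - a) :=
    div_nonneg (sub_nonneg.2 (le_min har hab.le)) (sub_pos.2 hab).le
  rw [← compl_Iic, prob_compl_eq_one_sub measurableSet_Iic, unif_Iic hab,
    ENNReal.ofReal_sub _ hF, ENNReal.ofReal_one]

theorem lintegral_unif_ofReal (hab : a < b) {f : ℝ → ℝ} (hf : IntervalIntegrable f volume a b)
    (hnn : ∀ x ∈ Icc a b, 0 ≤ f x) :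
    ∫⁻ x, ENNReal.ofReal (f x) ∂unif a b =
      ENNReal.ofReal ((∫ x in a..b, f x) / (b - a)) := by
  rw [lintegral_unif, ← ofReal_integral_eq_lintegral_ofReal
      ((intervalIntegrable_iff_integrableOn_Icc_of_le hab.le).1 hf)
      ((ae_restrict_iff' measurableSet_Icc).2 (ae_of_all _ hnn)),
    integral_Icc_eq_integral_Ioc, ← intervalIntegral.integral_of_le hab.le,
    ENNReal.ofReal_div_of_pos (sub_pos.2 hab), div_eq_mul_inv, mul_comm]

end Uniform

theorem MeasureTheory.Measure.prod_union_compl_prod {α β : Type*} [MeasurableSpace α]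
    [MeasurableSpace β] (μ : Measure α) (ν : Measure β) [SFinite μ] [SFinite ν] {C : Set α}
    (hC : MeasurableSet C) (s : Set β) {t : Set β} (ht : MeasurableSet t) :
    μ.prod ν (C ×ˢ s ∪ Cᶜ ×ˢ t) = μ C * ν s + μ Cᶜ * ν t := by
  rw [measure_union (disjoint_compl_right.set_prod_left _ _) (hC.compl.prod ht),
    Measure.prod_prod, Measure.prod_prod]

theorem integral_quadratic (p q s a b : ℝ) :
    ∫ u in a..b, (p + q * u + s * u ^ 2) =
      p * (b - a) + q * (b ^ 2 - a ^ 2) / 2 + s * (b ^ 3 - a ^ 3) / 3 := by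
  have hderiv : ∀ u : ℝ, HasDerivAt (fun v => p * v + q / 2 * v ^ 2 + s / 3 * v ^ 3)
      (p + q * u + s * u ^ 2) u := fun u =>
    ((((hasDerivAt_id u).const_mul p).add ((hasDerivAt_pow 2 u).const_mul (q / 2))).add
      ((hasDerivAt_pow 3 u).const_mul (s / 3))).congr_deriv (by norm_num; ring)
  rw [integral_eq_sub_of_hasDerivAt (fun u _ => hderiv u)
    ((by fun_prop : Continuous fun u : ℝ => p + q * u + s * u ^ 2).intervalIntegrable a b)]
  ring

theorem intervalIntegrable_ite_lt {f g : ℝ → ℝ} (hf : Continuous f) (hg : Continuous g)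
    (a b c : ℝ) : IntervalIntegrable (fun x => if x < c then f x else g x) volume a b := by
  have hsplit : uIcc a b = uIcc a b ∩ Iio c ∪ uIcc a b ∩ Ici c := by
    rw [← inter_union_distrib_left, Iio_union_Ici, inter_univ]
  set F := fun x => if x < c then f x else g x
  have hlt : IntegrableOn F (uIcc a b ∩ Iio c) :=
    (hf.integrableOn_uIcc.mono_set inter_subset_left).congr_fun
      (fun x hx => (if_pos hx.2).symm) (measurableSet_uIcc.inter measurableSet_Iio)
  have hge : IntegrableOn F (uIcc a b ∩ Ici c) :=
    (hg.integrableOn_uIcc.mono_set inter_subset_left).congr_fun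
      (fun x hx => (if_neg (not_lt.2 hx.2)).symm) (measurableSet_uIcc.inter measurableSet_Ici)
  rw [intervalIntegrable_iff', hsplit]
  exact hlt.union hge

theorem integral_ite_lt {f g : ℝ → ℝ} (hf : Continuous f) (hg : Continuous g) {a b c : ℝ}
    (hac : a ≤ c) (hcb : c ≤ b) :
    ∫ x in a..b, (if x < c then f x else g x) = (∫ x in a..c, f x) + ∫ x in c..b, g x := by
  rw [← integral_add_adjacent_intervals (intervalIntegrable_ite_lt hf hg a c c)
    (intervalIntegrable_ite_lt hf hg c b c)]
  congr 1
  · exact integral_congr_Ioo_of_le hac fun x hx => if_pos hx.2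
  · exact integral_congr_Ioo_of_le hcb fun x hx => if_neg (not_lt.2 hx.1.le)

def schedulerWins (τ : ℝ) : Set (ℝ × ℝ × ℝ × ℝ) :=
  {p | (max (p.1 - p.2.1) 0 < p.2.2.1 ∧ min p.1 p.2.1 < τ ∧ max (p.1 - p.2.1) 0 < p.2.2.2) ∨
    (¬ (max (p.1 - p.2.1) 0 < p.2.2.1 ∧ min p.1 p.2.1 < τ) ∧ p.2.2.2 < max (p.1 - p.2.1) 0)}

theorem measurableSet_schedulerWins (τ : ℝ) : MeasurableSet (schedulerWins τ) := by
  unfold schedulerWins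
  measurability

/-- For `r ≥ 0`, `min r 4 / 4 = P(Z' ≤ r)` and `min r 1 = P(Y < r)`. -/
noncomputable def winProbByOrder (r : ℝ) : ℝ :=
  (1 - min r 4 / 4) * (1 - min r 1) + min r 4 / 4 * min r 1

noncomputable def winProb (τ x z : ℝ) : ℝ :=
  if min x z < τ then winProbByOrder (max (x - z) 0) else min (max (x - z) 0) 1

theorem prod_unif_win_given {r : ℝ} (hr : 0 ≤ r) (guard : Prop) [Decidable guard] :
    (unif 0 4).prod (unif 0 1)
        {w | (r < w.1 ∧ guard ∧ r < w.2) ∨ (¬ (r < w.1 ∧ guard) ∧ w.2 < r)} =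
      ENNReal.ofReal (if guard then winProbByOrder r else min r 1) := by
  have hC : MeasurableSet {t : ℝ | r < t ∧ guard} := measurableSet_Ioi.inter (.const guard)
  have hset :
      {w : ℝ × ℝ | (r < w.1 ∧ guard ∧ r < w.2) ∨ (¬ (r < w.1 ∧ guard) ∧ w.2 < r)} =
      {t | r < t ∧ guard} ×ˢ Ioi r ∪ {t | r < t ∧ guard}ᶜ ×ˢ Iio r := by
    ext w
    simp only [mem_ofPred_eq, mem_union, mem_prod, mem_compl_iff, mem_Ioi, mem_Iio]
    tauto
  rw [hset, Measure.prod_union_compl_prod _ _ hC _ measurableSet_Iio,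
    unif_Ioi zero_lt_one hr, unif_Iio zero_lt_one]
  simp only [sub_zero, div_one]
  have hq : 0 ≤ min r 1 := le_min hr zero_le_one
  by_cases hg : guard
  · have hIoi : {t : ℝ | r < t ∧ guard} = Ioi r := by ext; simp [hg]
    have hp : 0 ≤ min r 4 / 4 := div_nonneg (le_min hr zero_le_four) zero_le_four
    have hp₁ : 0 ≤ 1 - min r 4 / 4 := by linarith [min_le_right r 4]
    rw [hIoi, compl_Ioi, unif_Ioi four_pos hr, unif_Iic four_pos, if_pos hg]
    simp only [sub_zero]
    rw [winProbByOrder, ← ENNReal.ofReal_mul hp₁, ← ENNReal.ofReal_mul hp,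
      ← ENNReal.ofReal_add (mul_nonneg hp₁ (by linarith [min_le_right r 1])) (mul_nonneg hp hq)]
  · have hempty : {t : ℝ | r < t ∧ guard} = ∅ := by ext; simp [hg]
    rw [hempty, compl_empty, measure_empty, (isProbabilityMeasure_unif four_pos).measure_univ,
      if_neg hg, zero_mul, one_mul, zero_add]

theorem measure_schedulerWins_eq_lintegral (τ : ℝ) :
    (unif 0 8).prod ((unif 0 4).prod ((unif 0 4).prod (unif 0 1))) (schedulerWins τ) =
      ∫⁻ x, ∫⁻ z, ENNReal.ofReal (winProb τ x z) ∂unif 0 4 ∂unif 0 8 := by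
  have hS := measurableSet_schedulerWins τ
  rw [Measure.prod_apply hS]
  refine lintegral_congr fun x => ?_
  rw [Measure.prod_apply (measurable_prodMk_left hS)]
  exact lintegral_congr fun z => prod_unif_win_given (le_max_right (x - z) 0) (min x z < τ)

theorem continuous_winProbByOrder : Continuous winProbByOrder := by
  unfold winProbByOrder; fun_prop

theorem winProbByOrder_zero : winProbByOrder 0 = 1 := by norm_num [winProbByOrder]

theorem winProbByOrder_nonneg {r : ℝ} (hr : 0 ≤ r) : 0 ≤ winProbByOrder r := by
  have : min r 4 ≤ 4 := min_le_right r 4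
  have : min r 1 ≤ 1 := min_le_right r 1
  unfold winProbByOrder
  exact add_nonneg (mul_nonneg (by linarith) (by linarith))
    (mul_nonneg (div_nonneg (le_min hr zero_le_four) zero_le_four) (le_min hr zero_le_one))

theorem integral_winProbByOrder_max_zero {c d : ℝ} (hc : c ≤ 0) (hd : 4 ≤ d) :
    ∫ u in c..d, winProbByOrder (max u 0) = d - c - 19 / 12 := by
  have hintegrable (a b : ℝ) :
      IntervalIntegrable (fun u => winProbByOrder (max u 0)) volume a b :=
    (continuous_winProbByOrder.comp (by fun_prop)).intervalIntegrable a b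
  rw [← integral_add_adjacent_intervals (hintegrable c 0) (hintegrable 0 d),
    ← integral_add_adjacent_intervals (hintegrable 0 1) (hintegrable 1 d),
    ← integral_add_adjacent_intervals (hintegrable 1 4) (hintegrable 4 d),
    integral_congr_Ioo_of_le hc (g := fun _ => 1) fun u hu => by
      simp [max_eq_right hu.2.le, winProbByOrder_zero],
    integral_congr_Ioo_of_le zero_le_one (g := fun u => 1 + (-5 / 4) * u + 1 / 2 * u ^ 2)
      fun u hu => by
        simp only [winProbByOrder, max_eq_left hu.1.le, min_eq_left hu.2.le,
          min_eq_left (by linarith [hu.2] : u ≤ 4)]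
        ring,
    integral_congr_Ioo_of_le (a := 1) (b := 4) (by norm_num)
      (g := fun u => 0 + 1 / 4 * u + 0 * u ^ 2) fun u hu => by
        simp only [winProbByOrder, max_eq_left (by linarith [hu.1] : (0 : ℝ) ≤ u),
          min_eq_right hu.1.le, min_eq_left hu.2.le]
        ring,
    integral_congr_Ioo_of_le hd (g := fun _ => 1) fun u hu => by
      simp [winProbByOrder, max_eq_left (by linarith [hu.1] : (0 : ℝ) ≤ u),
        min_eq_right (by linarith [hu.1] : (1 : ℝ) ≤ u), min_eq_right hu.1.le],
    integral_quadratic, integral_quadratic, intervalIntegral.integral_const,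
    intervalIntegral.integral_const]
  norm_num
  ring

theorem integral_min_max_zero_one {c d : ℝ} (hc : c ≤ 0) (hd : 1 ≤ d) :
    ∫ u in c..d, min (max u 0) 1 = d - 1 / 2 := by
  have hintegrable (a b : ℝ) : IntervalIntegrable (fun u : ℝ => min (max u 0) 1) volume a b :=
    (by fun_prop : Continuous fun u : ℝ => min (max u 0) 1).intervalIntegrable a b
  rw [← integral_add_adjacent_intervals (hintegrable c 0) (hintegrable 0 d),
    ← integral_add_adjacent_intervals (hintegrable 0 1) (hintegrable 1 d),
    integral_congr_Ioo_of_le hc (g := fun _ => 0) fun u hu => by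
      simp [max_eq_right hu.2.le],
    integral_congr_Ioo_of_le zero_le_one (g := fun u => 0 + 1 * u + 0 * u ^ 2) fun u hu => by
      simp [max_eq_left hu.1.le, min_eq_left hu.2.le],
    integral_congr_Ioo_of_le hd (g := fun _ => 1) fun u hu => by
      simp [max_eq_left (by linarith [hu.1] : (0 : ℝ) ≤ u), min_eq_right hu.1.le],
    integral_quadratic, intervalIntegral.integral_const, intervalIntegral.integral_const]
  norm_num
  ring

theorem winProb_of_lt {τ x z : ℝ} (hz : z < τ) :
    winProb τ x z = winProbByOrder (max (x - z) 0) :=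
  if_pos ((min_le_right x z).trans_lt hz)

theorem winProb_of_le {τ x z : ℝ} (hz : τ ≤ z) :
    winProb τ x z = if x < τ then 1 else min (max (x - z) 0) 1 := by
  unfold winProb
  by_cases hx : x < τ
  · rw [if_pos ((min_le_left x z).trans_lt hx), if_pos hx, max_eq_right (by linarith),
      winProbByOrder_zero]
  · rw [if_neg (not_lt.2 (le_min (not_lt.1 hx) hz)), if_neg hx]

theorem winProb_nonneg (τ x z : ℝ) : 0 ≤ winProb τ x z := by
  unfold winProb
  split_ifs
  exacts [winProbByOrder_nonneg (le_max_right _ _), le_min (le_max_right _ _) zero_le_one]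

theorem measurable_winProb (τ : ℝ) : Measurable (Function.uncurry (winProb τ)) :=
  Measurable.ite (measurableSet_lt (by fun_prop) measurable_const)
    (continuous_winProbByOrder.comp (by fun_prop)).measurable (by fun_prop)

theorem intervalIntegrable_winProb (τ z a b : ℝ) :
    IntervalIntegrable (winProb τ · z) volume a b := by
  rcases lt_or_ge z τ with hz | hz
  · simp_rw [winProb_of_lt hz]
    exact (continuous_winProbByOrder.comp (by fun_prop)).intervalIntegrable a b
  · simp_rw [winProb_of_le hz]
    exact intervalIntegrable_ite_lt continuous_const (by fun_prop) a b τ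

theorem integral_winProb {τ z : ℝ} (hτ : 0 ≤ τ) (hz : z ∈ Icc (0 : ℝ) 4) :
    ∫ x in (0 : ℝ)..8, winProb τ x z = if z < τ then 77 / 12 else τ + 15 / 2 - z := by
  split_ifs with hzτ
  · simp_rw [winProb_of_lt hzτ]
    rw [integral_comp_sub_right (fun u => winProbByOrder (max u 0)),
      integral_winProbByOrder_max_zero (by linarith [hz.1]) (by linarith [hz.2])]
    ring
  · push Not at hzτ
    simp_rw [winProb_of_le hzτ]
    rw [integral_ite_lt continuous_const (by fun_prop) hτ (by linarith [hz.2]),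
      intervalIntegral.integral_const, integral_comp_sub_right (fun u => min (max u 0) 1),
      integral_min_max_zero_one (by linarith) (by linarith [hz.2]), smul_eq_mul]
    ring

theorem measure_schedulerWins {τ : ℝ} (hτ₀ : 0 ≤ τ) (hτ₄ : τ ≤ 4) :
    (unif 0 8).prod ((unif 0 4).prod ((unif 0 4).prod (unif 0 1))) (schedulerWins τ) =
      ENNReal.ofReal ((77 * τ / 12 + (4 - τ) * (τ + 15 / 2) - (16 - τ ^ 2) / 2) / 32) := by
  have hlinear : Continuous fun z : ℝ => τ + 15 / 2 - z := by fun_prop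
  have hinner : ∀ᵐ z ∂unif 0 4, ∫⁻ x, ENNReal.ofReal (winProb τ x z) ∂unif 0 8 =
      ENNReal.ofReal ((if z < τ then 77 / 12 else τ + 15 / 2 - z) / 8) := by
    filter_upwards [ae_unif_mem_Icc] with z hz
    rw [lintegral_unif_ofReal (by norm_num) (intervalIntegrable_winProb τ z 0 8)
      (fun x _ => winProb_nonneg τ x z), integral_winProb hτ₀ hz, sub_zero]
  rw [measure_schedulerWins_eq_lintegral,
    lintegral_lintegral_swap (measurable_winProb τ).ennreal_ofReal.aemeasurable,
    lintegral_congr_ae hinner, lintegral_unif_ofReal four_pos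
      ((intervalIntegrable_ite_lt continuous_const hlinear 0 4 τ).div_const 8),
    intervalIntegral.integral_div, integral_ite_lt continuous_const hlinear hτ₀ hτ₄]
  · congr 1
    rw [intervalIntegral.integral_sub intervalIntegrable_const
      intervalIntegral.intervalIntegrable_id, integral_id, intervalIntegral.integral_const,
      intervalIntegral.integral_const]
    simp only [smul_eq_mul]
    ring
  · intro z hz
    split_ifs <;> linarith [hz.2]

/-- Let `X ~ Uni(0,8)`, `Z ~ Uni(0,4)`, `Z' ~ Uni(0,4)`, `Y ~ Uni(0,1)` be independent
(modelled by the product measure, with `p = (x, z, z', y)`), and set `R := max (X - Z) 0`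
and `T := min X Z`.  Then
`P((R < Z' ∧ T < 35/12 ∧ R < Y) ∨ (¬(R < Z' ∧ T < 35/12) ∧ Y < R)) = 7561/9216`.
In particular, `7561/9216 > 77/96`. -/
theorem stmt_3 :
    ((unif 0 8).prod ((unif 0 4).prod ((unif 0 4).prod (unif 0 1))))
        {p : ℝ × ℝ × ℝ × ℝ |
          (max (p.1 - p.2.1) 0 < p.2.2.1 ∧ min p.1 p.2.1 < 35/12 ∧
            max (p.1 - p.2.1) 0 < p.2.2.2) ∨
          (¬ (max (p.1 - p.2.1) 0 < p.2.2.1 ∧ min p.1 p.2.1 < 35/12) ∧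
            p.2.2.2 < max (p.1 - p.2.1) 0)} = 7561/9216 ∧
    (7561/9216 : ℝ) > 77/96 := by
  refine ⟨(measure_schedulerWins (τ := 35 / 12) (by norm_num) (by norm_num)).trans ?_,
    by norm_num⟩
  norm_num [ENNReal.ofReal_div_of_pos]
end

section
/- Let X, Y, Z, X', Y' be independent random variables, each uniformly distributed on [0,1]. For every Borel set B ⊆ ℝ³, P( (X < Y and (Z + X, X, Y') ∈ B) or (Y < X and (Z + Y, X', Y) ∉ B) ) < 1. -/
/-!
If the scheduler won almost surely, then `B` would contain almost every observation
`(Z + X, X, Y')` with `X < Y` and miss almost every observation `(Z + Y, X', Y)` with `Y < X`.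
After relabelling the independent coordinates, both kinds of observation are `(t, a, c)` with
`a, c` fixed: the slice `{t | (t, a, c) ∈ B}` would contain almost all of `[a, a + 1]` and
avoid almost all of `[c, c + 1]`, yet these intervals overlap in positive length when `|a - c| < 1`.
-/

open MeasureTheory Set

theorem unif_zero_one : unif 0 1 = volume.restrict (Icc 0 1) := by
  simp [unif, Real.volume_Icc]

instance : IsProbabilityMeasure (unif 0 1) := by
  rw [unif_zero_one]
  exact ⟨by simp⟩

theorem exists_mem_Ioo_of_ae_restrict_Icc {P : ℝ → Prop} {u s t v : ℝ} (hus : u ≤ s)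
    (hst : s < t) (htv : t ≤ v) (h : ∀ᵐ x ∂volume.restrict (Icc u v), P x) :
    ∃ x ∈ Ioo s t, P x :=
  have := ae_restrict_neBot.2 (by simpa using hst : volume (Ioo s t) ≠ 0)
  ((ae_restrict_mem measurableSet_Ioo).and
    (ae_restrict_of_ae_restrict_of_subset (Ioo_subset_Icc_self.trans (Icc_subset_Icc hus htv))
      h)).exists

theorem not_ae_add_mem_and_add_notMem {C : Set ℝ} {a b : ℝ} (hab : |a - b| < 1) :
    ¬ ∀ᵐ z ∂volume.restrict (Icc (0 : ℝ) 1), z + a ∈ C ∧ z + b ∉ C := by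
  intro h
  rw [ae_restrict_iff' measurableSet_Icc] at h
  -- compare the property at `z` with the property at `z + (a - b)`: both talk about `z + a`
  have h' := (measurePreserving_add_right volume (a - b)).quasiMeasurePreserving.ae h
  have hnull : volume (Ioo (max 0 (b - a)) (min 1 (1 + b - a))) = 0 := by
    refine measure_eq_zero_iff_ae_notMem.2 ?_
    filter_upwards [h, h'] with z hz hz' ⟨hlo, hhi⟩
    rw [max_lt_iff] at hlo
    rw [lt_min_iff] at hhi
    have hza := (hz ⟨hlo.1.le, hhi.1.le⟩).1
    have hzb := (hz' ⟨by linarith, by linarith⟩).2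
    rw [add_assoc, sub_add_cancel] at hzb
    exact hzb hza
  rw [Real.volume_Ioo, ENNReal.ofReal_eq_zero, sub_nonpos] at hnull
  rw [abs_sub_lt_iff] at hab
  exact hnull.not_gt
    (max_lt (lt_min (by norm_num) (by linarith)) (lt_min (by linarith) (by linarith)))

section ProdPermutation

variable {α β γ : Type*} [MeasurableSpace α] [MeasurableSpace β] [MeasurableSpace γ]
  {μa : Measure α} {μb : Measure β} {μc : Measure γ} [SFinite μa] [SFinite μb] [SFinite μc]

theorem measurePreserving_prod_rotate :
    MeasurePreserving (fun p : α × β × γ => (p.2.1, p.2.2, p.1))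
      (μa.prod (μb.prod μc)) (μb.prod (μc.prod μa)) :=
  (measurePreserving_prodAssoc μb μc μa).comp Measure.measurePreserving_swap

theorem measurePreserving_prod_left_comm :
    MeasurePreserving (fun p : α × β × γ => (p.2.1, p.1, p.2.2))
      (μa.prod (μb.prod μc)) (μb.prod (μa.prod μc)) :=
  ((MeasurePreserving.id μb).prod Measure.measurePreserving_swap).comp
    measurePreserving_prod_rotate

end ProdPermutation

section FivefoldProduct

variable {α : Type*} [MeasurableSpace α] {ν : Measure α} [SFinite ν]

theorem measurePreserving_rotate_last_three :
    MeasurePreserving (fun q : α × α × α × α × α => (q.1, q.2.1, q.2.2.2.1, q.2.2.2.2, q.2.2.1))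
      (ν.prod (ν.prod (ν.prod (ν.prod ν)))) (ν.prod (ν.prod (ν.prod (ν.prod ν)))) :=
  (MeasurePreserving.id ν).prod ((MeasurePreserving.id ν).prod measurePreserving_prod_rotate)

theorem measurePreserving_move_first_to_fourth :
    MeasurePreserving (fun q : α × α × α × α × α => (q.2.1, q.2.2.1, q.2.2.2.1, q.1, q.2.2.2.2))
      (ν.prod (ν.prod (ν.prod (ν.prod ν)))) (ν.prod (ν.prod (ν.prod (ν.prod ν)))) :=
  ((MeasurePreserving.id ν).prod ((MeasurePreserving.id ν).prod
    measurePreserving_prod_left_comm)).comp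
    (((MeasurePreserving.id ν).prod measurePreserving_prod_left_comm).comp
      measurePreserving_prod_left_comm)

end FivefoldProduct

-- In coordinates `q = (a, b, c, z, e)`, both observations lie on the line `{(t, a, c)}`.
theorem not_ae_shift_mem_and_shift_notMem (B : Set (ℝ × ℝ × ℝ)) :
    ¬ ∀ᵐ q ∂(unif 0 1).prod ((unif 0 1).prod ((unif 0 1).prod ((unif 0 1).prod (unif 0 1)))),
      (q.1 < q.2.1 → (q.2.2.2.1 + q.1, q.1, q.2.2.1) ∈ B) ∧
      (q.2.2.1 < q.2.1 → (q.2.2.2.1 + q.2.2.1, q.1, q.2.2.1) ∉ B) := by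
  intro h
  rw [unif_zero_one] at h
  obtain ⟨a, ha, h⟩ := exists_mem_Ioo_of_ae_restrict_Icc le_rfl (by norm_num : (0 : ℝ) < 1 / 2)
    (by norm_num) (Measure.ae_ae_of_ae_prod h)
  obtain ⟨b, hb, h⟩ := exists_mem_Ioo_of_ae_restrict_Icc (by norm_num)
    (by norm_num : (1 / 2 : ℝ) < 1) le_rfl (Measure.ae_ae_of_ae_prod h)
  obtain ⟨c, hc, h⟩ := exists_mem_Ioo_of_ae_restrict_Icc le_rfl (by norm_num : (0 : ℝ) < 1 / 2)
    (by norm_num) (Measure.ae_ae_of_ae_prod h)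
  refine not_ae_add_mem_and_add_notMem (C := {t | (t, a, c) ∈ B}) (a := a) (b := c)
    (abs_sub_lt_iff.2 ⟨by linarith [ha.2, hc.1], by linarith [ha.1, hc.2]⟩) ?_
  filter_upwards [Measure.ae_ae_of_ae_prod h] with z hz
  obtain ⟨e, -, he⟩ := exists_mem_Ioo_of_ae_restrict_Icc le_rfl zero_lt_one le_rfl hz
  exact ⟨he.1 (ha.2.trans hb.1), he.2 (hc.2.trans hb.1)⟩

/-- Let `X`, `Y`, `Z`, `X'`, `Y'` be independent, each `Uni(0,1)` (modelled by the product
measure, with `p = (x, y, z, x', y')`).  For every Borel set `B ⊆ ℝ³`,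
`P((X < Y ∧ (Z + X, X, Y') ∈ B) ∨ (Y < X ∧ (Z + Y, X', Y) ∉ B)) < 1`. -/
theorem stmt_12 (B : Set (ℝ × ℝ × ℝ)) (hB : MeasurableSet B) :
    ((unif 0 1).prod ((unif 0 1).prod ((unif 0 1).prod ((unif 0 1).prod (unif 0 1)))))
        {p : ℝ × ℝ × ℝ × ℝ × ℝ |
          (p.1 < p.2.1 ∧ (p.2.2.1 + p.1, p.1, p.2.2.2.2) ∈ B) ∨
          (p.2.1 < p.1 ∧ (p.2.2.1 + p.2.1, p.2.2.2.1, p.2.1) ∉ B)} < 1 := by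
  by_contra hlt
  have hE : MeasurableSet {p : ℝ × ℝ × ℝ × ℝ × ℝ |
      (p.1 < p.2.1 ∧ (p.2.2.1 + p.1, p.1, p.2.2.2.2) ∈ B) ∨
      (p.2.1 < p.1 ∧ (p.2.2.1 + p.2.1, p.2.2.2.1, p.2.1) ∉ B)} := by
    measurability
  have hae := (ae_iff_measure_eq hE.nullMeasurableSet).2
    ((le_antisymm prob_le_one (not_lt.1 hlt)).trans measure_univ.symm)
  refine not_ae_shift_mem_and_shift_notMem B ?_
  -- read `p` as `(a, b, z, e, c)` for the first event and as `(b, c, z, a, e)` for the second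
  filter_upwards [measurePreserving_rotate_last_three.quasiMeasurePreserving.ae hae,
    measurePreserving_move_first_to_fourth.quasiMeasurePreserving.ae hae] with q h1 h2
  exact ⟨fun hab => (h1.resolve_right fun h => h.1.asymm hab).2,
    fun hcb => (h2.resolve_left fun h => h.1.asymm hcb).2⟩
end
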